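/- arXiv:1602.08504 — 2 statements merged into one kernel-verified Lean document; each statement's English description precedes it below -/
import Mathlib

section
/- Every contextual category C arises, up to isomorphism, from a model of the theory of substitutions 𝕊: define M_{(ctx,n)} = Ob_n(C), M_{(tm,n)} = { (A, s) : A ∈ Ob_{n+1}(C), s a section of p_A }, with ty, ft, the variables v_{n,i} given by v_{n,i}(A) = (p^{i+1}(A)*(ft^i(A)), s_{p^i_A}), and substitution defined by iterated pullback; then M is a model of 𝕊 and its associated contextual category F(M) is isomorphic to C. -/
/-!
The model has the objects of `C` as contexts and the sections of projections as terms. A tuple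
`(a₁, …, a_{k+1})` of terms in `Γ` is read as a morphism `α(a) : Γ → A` by induction: `a_{k+1}`
must be a section of the pullback of `A` along `α(a₁, …, a_k)`, and composing it with `q` gives
`α(a)`. By the universal property of the pullback, a morphism `g : Γ → A` is determined by
`p_A ∘ g` and the section through which it factors, so `α` is a bijection onto morphisms.
Substitution is pullback along `α`, and the axioms of `𝕊` all reduce to one naturality property:
substituting `u` into the term induced by `g` gives the term induced by `g ∘ u`. This follows
from pasting pullback squares, i.e. from the strict functoriality of `pb` and `q`.
-/

universe u

/-- Iterated `ft`, lowering a context of length `k` to one of length `m ≤ k`. -/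
def ftLe' {Ctx : ℕ → Type u} (ft : ∀ n, Ctx (n + 1) → Ctx n) :
    ∀ {k m : ℕ}, m ≤ k → Ctx k → Ctx m
  | 0, 0, _, A => A
  | k + 1, m, h, A =>
    if hm : m = k + 1 then cast (congrArg Ctx hm.symm) A
    else ftLe' ft (by omega) (ft k A)

/-- A model of the partial Horn theory of substitutions `𝕊`: sorts `(ctx, n)` and `(tm, n)`
(with `(ty, n) := (ctx, n+1)`), operations `*`, `ft`, `ty`, variables `v_{n,i}` and full
substitution `subst_{p,n,k}` (a partial operation, represented using `Part`), subject to the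
axioms of `𝕊`. -/
structure SubModel : Type (u + 1) where
  Ctx : ℕ → Type u
  Tm : ℕ → Type u
  star : Ctx 0
  ctx_zero_unique : ∀ A : Ctx 0, A = star
  ft : ∀ n, Ctx (n + 1) → Ctx n
  ty : ∀ n, Tm n → Ctx (n + 1)
  v : ∀ n i, i < n → Ctx n → Tm n
  substTy : ∀ n k, Ctx n → Ctx (k + 1) → (Fin k → Tm n) → Part (Ctx (n + 1))
  substTm : ∀ n k, Ctx n → Tm k → (Fin k → Tm n) → Part (Tm n)
  -- the axioms are stated below, after the auxiliary definitions
  ax_def_substTy : ∀ n k (B : Ctx n) (A : Ctx (k + 1)) (a : Fin k → Tm n),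
    (substTy n k B A a).Dom ↔
      ∀ i : Fin k, ty n (a i) ∈ substTy n i B
        (ftLe' ft (Nat.succ_le_of_lt i.isLt) (ft k A))
        (fun j => a (Fin.castLE (le_of_lt i.isLt) j))
  ax_def_substTm : ∀ n k (B : Ctx n) (b : Tm k) (a : Fin k → Tm n),
    (substTm n k B b a).Dom ↔
      ∀ i : Fin k, ty n (a i) ∈ substTy n i B
        (ftLe' ft (Nat.succ_le_of_lt i.isLt) (ft k (ty k b)))
        (fun j => a (Fin.castLE (le_of_lt i.isLt) j))
  ax_type_var : ∀ n i (h : i < n) (A : Ctx n),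
    ty n (v n i h A) ∈ substTy n (n - i - 1) A
      (ftLe' ft (by omega) A)
      (fun j => v n (n - 1 - j) (by omega) A)
  ax_type_substTy : ∀ n k B A a C, C ∈ substTy n k B A a → ft n C = B
  ax_type_substTm : ∀ n k (B : Ctx n) (b : Tm k) (a : Fin k → Tm n),
    (substTm n k B b a).map (ty n) = substTy n k B (ty k b) a
  ax_subst_var_ty : ∀ n (A : Ctx (n + 1)),
    substTy n n (ft n A) A (fun j => v n (n - 1 - j) (by omega) (ft n A)) = Part.some A
  ax_subst_var_tm : ∀ n (b : Tm n),
    substTm n n (ft n (ty n b)) b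
      (fun j => v n (n - 1 - j) (by omega) (ft n (ty n b))) = Part.some b
  ax_var_subst : ∀ n k (B : Ctx n) (A : Ctx k) (a : Fin k → Tm n)
    (_ : ∀ i : Fin k, ty n (a i) ∈ substTy n i B
        (ftLe' ft (Nat.succ_le_of_lt i.isLt) A)
        (fun j => a (Fin.castLE (le_of_lt i.isLt) j)))
    (i : ℕ) (h : i < k),
    substTm n k B (v k i h A) a = Part.some (a ⟨k - i - 1, by omega⟩)
  ax_subst_subst_tm : ∀ n k m (C : Ctx n) (B : Ctx k) (b : Fin k → Tm n)
    (a : Fin m → Tm k) (t : Tm m)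
    (_ : ∀ i : Fin k, ty n (b i) ∈ substTy n i C
        (ftLe' ft (Nat.succ_le_of_lt i.isLt) B)
        (fun j => b (Fin.castLE (le_of_lt i.isLt) j)))
    (_ : ∀ i : Fin m, ty k (a i) ∈ substTy k i B
        (ftLe' ft (Nat.succ_le_of_lt i.isLt) (ft m (ty m t)))
        (fun j => a (Fin.castLE (le_of_lt i.isLt) j)))
    (s : Tm k) (_ : s ∈ substTm k m B t a)
    (c : Fin m → Tm n) (_ : ∀ i, c i ∈ substTm n k C (a i) b),
    substTm n k C s b = substTm n m C t c
  ax_subst_subst_ty : ∀ n k m (C : Ctx n) (B : Ctx k) (b : Fin k → Tm n)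
    (a : Fin m → Tm k) (A : Ctx (m + 1))
    (_ : ∀ i : Fin k, ty n (b i) ∈ substTy n i C
        (ftLe' ft (Nat.succ_le_of_lt i.isLt) B)
        (fun j => b (Fin.castLE (le_of_lt i.isLt) j)))
    (_ : ∀ i : Fin m, ty k (a i) ∈ substTy k i B
        (ftLe' ft (Nat.succ_le_of_lt i.isLt) (ft m A))
        (fun j => a (Fin.castLE (le_of_lt i.isLt) j)))
    (A' : Ctx (k + 1)) (_ : A' ∈ substTy k m B A a)
    (c : Fin m → Tm n) (_ : ∀ i, c i ∈ substTm n k C (a i) b),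
    substTy n k C A' b = substTy n m C A c


namespace SubModel

variable (M : SubModel.{u})

/-- The `Hom` predicate of `𝕊`: the tuple `(a_1, …, a_k)` is a morphism `B → A` of the
associated category, i.e. each `a_i` has the type obtained by substituting `a_1, …, a_{i-1}`
into the `i`-th component of `A`. -/
def Hom (n k : ℕ) (B : M.Ctx n) (A : M.Ctx k) (a : Fin k → M.Tm n) : Prop :=
  ∀ i : Fin k, M.ty n (a i) ∈ M.substTy n i B
    (ftLe' M.ft (Nat.succ_le_of_lt i.isLt) A)
    (fun j => a (Fin.castLE (le_of_lt i.isLt) j))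

/-- The identity morphism `id_A = (v_{n,n-1}(A), …, v_{n,0}(A))`. -/
def idTuple {n : ℕ} (A : M.Ctx n) : Fin n → M.Tm n :=
  fun j => M.v n (n - 1 - j) (by omega) A

/-- The projection `p_A = (v_{n+1,n}(A), …, v_{n+1,1}(A)) : A → ft(A)`. -/
def pTuple {n : ℕ} (A : M.Ctx (n + 1)) : Fin n → M.Tm (n + 1) :=
  fun j => M.v (n + 1) (n - j) (by omega) A

/-- `f : ft(A) → A` is a section of the projection `p_A`: it is a morphism and
`p_A ∘ f = id_{ft(A)}` (composition is componentwise substitution). -/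
def IsSection {k : ℕ} (A : M.Ctx (k + 1)) (f : Fin (k + 1) → M.Tm k) : Prop :=
  M.Hom k (k + 1) (M.ft k A) A f ∧
  ∀ j : Fin k, M.substTm k (k + 1) (M.ft k A) (M.pTuple A j) f =
    Part.some (M.idTuple (M.ft k A) j)

/-- The map `φ(a) = (v_{k,k-1}(ft A), …, v_{k,0}(ft A), a)`. -/
def phi {k : ℕ} (A : M.Ctx (k + 1)) (a : M.Tm k) : Fin (k + 1) → M.Tm k :=
  fun j => if h : (j : ℕ) < k then M.v k (k - 1 - j) (by omega) (M.ft k A) else a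

end SubModel




/-- A contextual category: a graded category with a terminal object of level `0`, maps
`ft`, projections `p_A`, and a strictly functorial choice of pullbacks `f*(A) = pb A B f`
with connecting maps `q(f, A)` along the projections. -/
structure CtxCat : Type (u + 1) where
  Ob : ℕ → Type u
  Hom : (Σ n, Ob n) → (Σ n, Ob n) → Type u
  id : ∀ X, Hom X X
  comp : ∀ {X Y Z}, Hom X Y → Hom Y Z → Hom X Z
  id_comp : ∀ {X Y} (f : Hom X Y), comp (id X) f = f
  comp_id : ∀ {X Y} (f : Hom X Y), comp f (id Y) = f
  assoc : ∀ {W X Y Z} (f : Hom W X) (g : Hom X Y) (h : Hom Y Z),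
    comp (comp f g) h = comp f (comp g h)
  pt : Ob 0
  pt_unique : ∀ A : Ob 0, A = pt
  toPt : ∀ X, Hom X ⟨0, pt⟩
  toPt_unique : ∀ X (f : Hom X ⟨0, pt⟩), f = toPt X
  ft : ∀ {n}, Ob (n + 1) → Ob n
  p : ∀ {n} (A : Ob (n + 1)), Hom ⟨n + 1, A⟩ ⟨n, ft A⟩
  pb : ∀ {n k} (A : Ob (n + 1)) (B : Ob k), Hom ⟨k, B⟩ ⟨n, ft A⟩ → Ob (k + 1)
  pb_ft : ∀ {n k} (A : Ob (n + 1)) (B : Ob k) (f : Hom ⟨k, B⟩ ⟨n, ft A⟩),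
    ft (pb A B f) = B
  q : ∀ {n k} (A : Ob (n + 1)) (B : Ob k) (f : Hom ⟨k, B⟩ ⟨n, ft A⟩),
    Hom ⟨k + 1, pb A B f⟩ ⟨n + 1, A⟩
  square : ∀ {n k} (A : Ob (n + 1)) (B : Ob k) (f : Hom ⟨k, B⟩ ⟨n, ft A⟩),
    comp (q A B f) (p A) =
      comp (cast (by rw [pb_ft A B f]) (p (pb A B f)) :
        Hom ⟨k + 1, pb A B f⟩ ⟨k, B⟩) f
  cartesian : ∀ {n k} (A : Ob (n + 1)) (B : Ob k) (f : Hom ⟨k, B⟩ ⟨n, ft A⟩)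
    {X : Σ n, Ob n} (g : Hom X ⟨n + 1, A⟩) (h : Hom X ⟨k, B⟩),
    comp g (p A) = comp h f →
    ∃! u : Hom X ⟨k + 1, pb A B f⟩, comp u (q A B f) = g ∧
      comp u (cast (by rw [pb_ft A B f]) (p (pb A B f)) :
        Hom ⟨k + 1, pb A B f⟩ ⟨k, B⟩) = h
  pb_id : ∀ {n} (A : Ob (n + 1)), pb A (ft A) (id ⟨n, ft A⟩) = A
  q_id : ∀ {n} (A : Ob (n + 1)), HEq (q A (ft A) (id ⟨n, ft A⟩)) (id ⟨n + 1, A⟩)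
  pb_comp : ∀ {n k m} (A : Ob (n + 1)) (B : Ob k) (f : Hom ⟨k, B⟩ ⟨n, ft A⟩)
    (C : Ob m) (g : Hom ⟨m, C⟩ ⟨k, B⟩),
    pb A C (comp g f) =
      pb (pb A B f) C (cast (by rw [pb_ft A B f]) g :
        Hom ⟨m, C⟩ ⟨k, ft (pb A B f)⟩)
  q_comp : ∀ {n k m} (A : Ob (n + 1)) (B : Ob k) (f : Hom ⟨k, B⟩ ⟨n, ft A⟩)
    (C : Ob m) (g : Hom ⟨m, C⟩ ⟨k, B⟩),
    HEq (q A C (comp g f))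
      (comp (q (pb A B f) C (cast (by rw [pb_ft A B f]) g)) (q A B f))

/-- A correspondence between a model `M` of the theory of substitutions `𝕊` and a
contextual category `C`, exhibiting `C` as the contextual category `F(M)` associated to `M`:
objects of level `n` are the contexts of length `n`, morphisms are the compatible tuples of
terms, composition is componentwise substitution, identities are the tuples of variables,
`ft` and the projections are as given, pullbacks `A[f]` are given by `subst_ty`, and the
connecting maps `q(f, A)` are given by weakened tuples together with the top variable. -/
structure SubCtxCorrespondence (M : SubModel.{u}) (C : CtxCat.{u}) where
  obEquiv : ∀ n, M.Ctx n ≃ C.Ob n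
  ft_compat : ∀ n (A : M.Ctx (n + 1)),
    C.ft (obEquiv (n + 1) A) = obEquiv n (M.ft n A)
  homEquiv : ∀ n k (B : M.Ctx n) (A : M.Ctx k),
    { a : Fin k → M.Tm n // M.Hom n k B A a } ≃
      C.Hom ⟨n, obEquiv n B⟩ ⟨k, obEquiv k A⟩
  id_compat : ∀ n (A : M.Ctx n) (h : M.Hom n n A A (M.idTuple A)),
    homEquiv n n A A ⟨M.idTuple A, h⟩ = C.id ⟨n, obEquiv n A⟩
  comp_compat : ∀ {n k m} (B : M.Ctx n) (A : M.Ctx k) (A' : M.Ctx m)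
    (f : { a // M.Hom n k B A a }) (g : { c // M.Hom k m A A' c })
    (h : { c // M.Hom n m B A' c }),
    (∀ i, h.1 i ∈ M.substTm n k B (g.1 i) f.1) →
    C.comp (homEquiv n k B A f) (homEquiv k m A A' g) = homEquiv n m B A' h
  p_compat : ∀ n (A : M.Ctx (n + 1)) (h : M.Hom (n + 1) n A (M.ft n A) (M.pTuple A)),
    homEquiv (n + 1) n A (M.ft n A) ⟨M.pTuple A, h⟩ =
      cast (by rw [ft_compat n A]) (C.p (obEquiv (n + 1) A))
  pb_compat : ∀ n k (B : M.Ctx n) (A : M.Ctx (k + 1)) (a : Fin k → M.Tm n)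
    (h : M.Hom n k B (M.ft k A) a) (T : M.Ctx (n + 1)) (_ : T ∈ M.substTy n k B A a),
    obEquiv (n + 1) T =
      C.pb (obEquiv (k + 1) A) (obEquiv n B)
        (cast (by rw [ft_compat k A]) (homEquiv n k B (M.ft k A) ⟨a, h⟩))
  q_compat : ∀ n k (B : M.Ctx n) (A : M.Ctx (k + 1)) (a : Fin k → M.Tm n)
    (h : M.Hom n k B (M.ft k A) a) (T : M.Ctx (n + 1)) (hT : T ∈ M.substTy n k B A a)
    (qf : Fin (k + 1) → M.Tm (n + 1)) (hq : M.Hom (n + 1) (k + 1) T A qf),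
    (∀ i : Fin k, qf i.castSucc ∈ M.substTm (n + 1) n T (a i) (M.pTuple T)) →
    qf (Fin.last k) = M.v (n + 1) 0 (by omega) T →
    homEquiv (n + 1) (k + 1) T A ⟨qf, hq⟩ =
      cast (by rw [pb_compat n k B A a h T hT])
        (C.q (obEquiv (k + 1) A) (obEquiv n B)
          (cast (by all_goals rw [ft_compat k A]) (homEquiv n k B (M.ft k A) ⟨a, h⟩)))

namespace CtxCat

variable {C : CtxCat.{u}}

abbrev Obj (C : CtxCat.{u}) := Σ n, C.Ob n

theorem obj_congr {k : ℕ} {B B' : C.Ob k} (e : B = B') : (⟨k, B⟩ : Obj C) = ⟨k, B'⟩ :=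
  congrArg _ e

def homCast {X X' Y Y' : Obj C} (ex : X = X') (ey : Y = Y') (f : C.Hom X Y) : C.Hom X' Y' :=
  ex ▸ ey ▸ f

/-- Morphisms bundled with their endpoints: equations in `Mor C` replace heterogeneous
equations between morphisms whose endpoints are only propositionally equal. -/
def Mor (C : CtxCat.{u}) := Σ X Y : Obj C, C.Hom X Y

def mor {X Y : Obj C} (f : C.Hom X Y) : Mor C := ⟨X, Y, f⟩

theorem mor_iff {X X' Y Y' : Obj C} {f : C.Hom X Y} {f' : C.Hom X' Y'} :
    mor f = mor f' ↔ X = X' ∧ Y = Y' ∧ HEq f f' := by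
  constructor
  · intro h
    obtain ⟨rfl, h⟩ := Sigma.mk.inj_iff.mp h
    obtain ⟨rfl, h⟩ := Sigma.mk.inj_iff.mp (eq_of_heq h)
    exact ⟨rfl, rfl, h⟩
  · rintro ⟨rfl, rfl, h⟩
    rw [eq_of_heq h]

theorem mor_ext {X Y : Obj C} {f g : C.Hom X Y} (h : mor f = mor g) : f = g :=
  eq_of_heq (mor_iff.mp h).2.2

@[simp] theorem mor_homCast {X X' Y Y' : Obj C} (ex : X = X') (ey : Y = Y') (f : C.Hom X Y) :
    mor (homCast ex ey f) = mor f := by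
  subst ex ey; rfl

theorem mor_cast {X X' Y Y' : Obj C} (ex : X = X') (ey : Y = Y')
    (h : C.Hom X Y = C.Hom X' Y') (f : C.Hom X Y) : mor (cast h f) = mor f := by
  subst ex ey; rfl

theorem mor_comp {X X' Y Y' Z Z' : Obj C} {f : C.Hom X Y} {f' : C.Hom X' Y'}
    {g : C.Hom Y Z} {g' : C.Hom Y' Z'} (hf : mor f = mor f') (hg : mor g = mor g') :
    mor (C.comp f g) = mor (C.comp f' g') := by
  obtain ⟨rfl, rfl, hf⟩ := mor_iff.mp hf
  obtain ⟨-, rfl, hg⟩ := mor_iff.mp hg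
  rw [eq_of_heq hf, eq_of_heq hg]

theorem mor_id {n : ℕ} {A A' : C.Ob n} (e : A = A') :
    mor (C.id ⟨n, A⟩) = mor (C.id ⟨n, A'⟩) := by
  subst e; rfl

theorem mor_p {n : ℕ} {A A' : C.Ob (n + 1)} (e : A = A') : mor (C.p A) = mor (C.p A') := by
  subst e; rfl

theorem pb_congr {m m' k : ℕ} {A : C.Ob (m + 1)} {A' : C.Ob (m' + 1)} {B : C.Ob k}
    {f : C.Hom ⟨k, B⟩ ⟨m, C.ft A⟩} {f' : C.Hom ⟨k, B⟩ ⟨m', C.ft A'⟩}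
    (em : m = m') (hA : HEq A A') (hf : mor f = mor f') : C.pb A B f = C.pb A' B f' := by
  subst em
  cases eq_of_heq hA
  rw [mor_ext hf]

theorem mor_q {m m' k : ℕ} {A : C.Ob (m + 1)} {A' : C.Ob (m' + 1)} {B : C.Ob k}
    {f : C.Hom ⟨k, B⟩ ⟨m, C.ft A⟩} {f' : C.Hom ⟨k, B⟩ ⟨m', C.ft A'⟩}
    (em : m = m') (hA : HEq A A') (hf : mor f = mor f') :
    mor (C.q A B f) = mor (C.q A' B f') := by
  subst em
  cases eq_of_heq hA
  rw [mor_ext hf]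

theorem eq_cast_of_mor {X X' Y Y' : Obj C} (ex : X = X') (ey : Y = Y')
    (h : C.Hom X Y = C.Hom X' Y') {f : C.Hom X' Y'} {g : C.Hom X Y} (hm : mor f = mor g) :
    f = cast h g := by
  subst ex ey; exact mor_ext hm

theorem hom_ext_zero {X : Obj C} {A : C.Ob 0} (f g : C.Hom X ⟨0, A⟩) : f = g := by
  cases C.pt_unique A
  rw [C.toPt_unique X f, C.toPt_unique X g]

noncomputable def pbProj {n k : ℕ} (A : C.Ob (n + 1)) (B : C.Ob k)
    (f : C.Hom ⟨k, B⟩ ⟨n, C.ft A⟩) : C.Hom ⟨k + 1, C.pb A B f⟩ ⟨k, B⟩ :=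
  homCast rfl (obj_congr (C.pb_ft A B f)) (C.p (C.pb A B f))

section Pullback

variable {n k : ℕ} (A : C.Ob (n + 1)) (B : C.Ob k) (f : C.Hom ⟨k, B⟩ ⟨n, C.ft A⟩)

theorem cast_p_eq_pbProj
    (h : C.Hom ⟨k + 1, C.pb A B f⟩ ⟨k, C.ft (C.pb A B f)⟩ = C.Hom ⟨k + 1, C.pb A B f⟩ ⟨k, B⟩) :
    cast h (C.p (C.pb A B f)) = pbProj A B f :=
  mor_ext ((mor_cast rfl (obj_congr (C.pb_ft A B f)) h _).trans (mor_homCast _ _ _).symm)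

theorem q_comp_p : C.comp (C.q A B f) (C.p A) = C.comp (pbProj A B f) f := by
  rw [C.square A B f, cast_p_eq_pbProj]

theorem cartesian_pbProj {X : Obj C} (g : C.Hom X ⟨n + 1, A⟩) (h : C.Hom X ⟨k, B⟩)
    (hsq : C.comp g (C.p A) = C.comp h f) :
    ∃! u : C.Hom X ⟨k + 1, C.pb A B f⟩,
      C.comp u (C.q A B f) = g ∧ C.comp u (pbProj A B f) = h := by
  simpa only [cast_p_eq_pbProj] using C.cartesian A B f g h hsq

theorem pb_hom_ext {X : Obj C} {u₁ u₂ : C.Hom X ⟨k + 1, C.pb A B f⟩}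
    (hq : C.comp u₁ (C.q A B f) = C.comp u₂ (C.q A B f))
    (hp : C.comp u₁ (pbProj A B f) = C.comp u₂ (pbProj A B f)) : u₁ = u₂ := by
  have hsq : C.comp (C.comp u₁ (C.q A B f)) (C.p A) = C.comp (C.comp u₁ (pbProj A B f)) f := by
    rw [C.assoc, C.assoc, q_comp_p]
  obtain ⟨u, -, huniq⟩ := cartesian_pbProj A B f _ _ hsq
  rw [huniq u₁ ⟨rfl, rfl⟩, huniq u₂ ⟨hq.symm, hp.symm⟩]

variable {m : ℕ} {D : C.Ob m} (g : C.Hom ⟨m, D⟩ ⟨k, B⟩)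

theorem pb_comp' {g' : C.Hom ⟨m, D⟩ ⟨k, C.ft (C.pb A B f)⟩} (hg : mor g' = mor g) :
    C.pb A D (C.comp g f) = C.pb (C.pb A B f) D g' := by
  rw [C.pb_comp A B f D g]
  exact pb_congr rfl HEq.rfl ((mor_cast rfl (obj_congr (C.pb_ft A B f)).symm _ _).trans hg.symm)

theorem mor_q_comp {g' : C.Hom ⟨m, D⟩ ⟨k, C.ft (C.pb A B f)⟩} (hg : mor g' = mor g) :
    mor (C.q A D (C.comp g f)) = mor (C.comp (C.q (C.pb A B f) D g') (C.q A B f)) := by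
  refine (mor_iff.mpr ⟨obj_congr (C.pb_comp A B f D g), rfl, C.q_comp A B f D g⟩).trans
    (mor_comp (mor_q rfl HEq.rfl ?_) rfl)
  exact (mor_cast rfl (obj_congr (C.pb_ft A B f)).symm _ _).trans hg.symm

end Pullback

theorem mor_q_id {n : ℕ} (A : C.Ob (n + 1)) :
    mor (C.q A (C.ft A) (C.id ⟨n, C.ft A⟩)) = mor (C.id ⟨n + 1, A⟩) :=
  mor_iff.mpr ⟨obj_congr (C.pb_id A), rfl, C.q_id A⟩

abbrev ftF (C : CtxCat.{u}) : ∀ n, C.Ob (n + 1) → C.Ob n := fun _ A => C.ft A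

theorem ftLe'_self {k : ℕ} (h : k ≤ k) (A : C.Ob k) : ftLe' (ftF C) h A = A := by
  cases k with
  | zero => rfl
  | succ k => exact (dif_pos rfl).trans (cast_eq _ _)

theorem ftLe'_succ {k m : ℕ} (h : m ≤ k + 1) (hm : m ≤ k) (A : C.Ob (k + 1)) :
    ftLe' (ftF C) h A = ftLe' (ftF C) hm (C.ft A) :=
  dif_neg (by omega)

theorem ft_ftLe' {m : ℕ} : ∀ {k : ℕ} (h : m + 1 ≤ k) (A : C.Ob k),
    C.ft (ftLe' (ftF C) h A) = ftLe' (ftF C) (by omega) A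
  | k + 1, h, A => by
    by_cases hm : m = k
    · subst hm
      rw [ftLe'_self h A, ftLe'_succ _ le_rfl A, ftLe'_self]
    · rw [ftLe'_succ h (by omega) A, ft_ftLe' (by omega) (C.ft A), ftLe'_succ _ (by omega) A]

noncomputable def pIter : ∀ {k m : ℕ} (h : m ≤ k) (A : C.Ob k),
    C.Hom ⟨k, A⟩ ⟨m, ftLe' (ftF C) h A⟩
  | 0, m, h, A =>
    homCast rfl (by cases Nat.le_zero.mp h; exact (obj_congr (ftLe'_self h A)).symm)
      (C.id ⟨0, A⟩)
  | k + 1, m, h, A =>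
    if hm : m = k + 1 then
      homCast rfl (by subst hm; exact (obj_congr (ftLe'_self h A)).symm) (C.id ⟨k + 1, A⟩)
    else
      homCast rfl (obj_congr (ftLe'_succ h (by omega) A).symm)
        (C.comp (C.p A) (pIter (by omega) (C.ft A)))

theorem mor_pIter_self {k : ℕ} (h : k ≤ k) (A : C.Ob k) :
    mor (pIter h A) = mor (C.id ⟨k, A⟩) := by
  cases k with
  | zero => rw [pIter, mor_homCast]
  | succ k => rw [pIter, dif_pos rfl, mor_homCast]

theorem mor_pIter_succ {k m : ℕ} (h : m ≤ k + 1) (hm : m ≤ k) (A : C.Ob (k + 1)) :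
    mor (pIter h A) = mor (C.comp (C.p A) (pIter hm (C.ft A))) := by
  rw [pIter, dif_neg (by omega), mor_homCast]

theorem mor_pIter_comp_p {m : ℕ} : ∀ {k : ℕ} (h : m + 1 ≤ k) (A : C.Ob k),
    mor (C.comp (pIter h A) (C.p (ftLe' (ftF C) h A))) = mor (pIter (by omega : m ≤ k) A)
  | k + 1, h, A => by
    by_cases hm : m = k
    · subst hm
      calc mor (C.comp (pIter h A) (C.p (ftLe' (ftF C) h A)))
          = mor (C.comp (C.id ⟨m + 1, A⟩) (C.p A)) :=
            mor_comp (mor_pIter_self h A) (mor_p (ftLe'_self h A))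
        _ = mor (C.comp (C.p A) (C.id ⟨m, C.ft A⟩)) := by rw [C.id_comp, C.comp_id]
        _ = mor (pIter (by omega : m ≤ m + 1) A) :=
            (mor_comp rfl (mor_pIter_self le_rfl (C.ft A)).symm).trans
              (mor_pIter_succ _ le_rfl A).symm
    · have hm1 : m + 1 ≤ k := by omega
      calc mor (C.comp (pIter h A) (C.p (ftLe' (ftF C) h A)))
          = mor (C.comp (C.p A) (C.comp (pIter hm1 (C.ft A))
              (C.p (ftLe' (ftF C) hm1 (C.ft A))))) := by
            rw [← C.assoc]
            exact mor_comp (mor_pIter_succ h hm1 A) (mor_p (ftLe'_succ h hm1 A))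
        _ = mor (pIter (by omega : m ≤ k + 1) A) :=
            (mor_comp rfl (mor_pIter_comp_p hm1 (C.ft A))).trans
              (mor_pIter_succ _ (by omega) A).symm

def Tm (C : CtxCat.{u}) (k : ℕ) : Type u :=
  Σ A : C.Ob (k + 1), { s : C.Hom ⟨k, C.ft A⟩ ⟨k + 1, A⟩ //
    C.comp s (C.p A) = C.id ⟨k, C.ft A⟩ }

theorem Tm.ext' {k : ℕ} {t t' : Tm C k} (h1 : t.1 = t'.1) (h2 : mor t.2.1 = mor t'.2.1) :
    t = t' := by
  obtain ⟨A, s, hs⟩ := t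
  obtain ⟨A', s', hs'⟩ := t'
  cases h1
  exact congrArg _ (Subtype.ext (mor_ext h2))

theorem ft_eq_of_eq_pb {k n : ℕ} {T : C.Ob (n + 1)} {A : C.Ob (k + 1)} {B : C.Ob n}
    {f : C.Hom ⟨n, B⟩ ⟨k, C.ft A⟩} (h : T = C.pb A B f) : C.ft T = B := by
  rw [h]; exact C.pb_ft A B f

section Induced

variable {m k : ℕ} {A : C.Ob (m + 1)} {B : C.Ob k} {f : C.Hom ⟨k, B⟩ ⟨m, C.ft A⟩}

theorem exists_pbSec (g : C.Hom ⟨k, B⟩ ⟨m + 1, A⟩) (hg : C.comp g (C.p A) = f) :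
    ∃ u : C.Hom ⟨k, B⟩ ⟨k + 1, C.pb A B f⟩,
      C.comp u (C.q A B f) = g ∧ C.comp u (pbProj A B f) = C.id ⟨k, B⟩ :=
  (cartesian_pbProj A B f g (C.id ⟨k, B⟩) (by rw [hg, C.id_comp])).exists

noncomputable def pbSec (g : C.Hom ⟨k, B⟩ ⟨m + 1, A⟩) (hg : C.comp g (C.p A) = f) :
    C.Hom ⟨k, B⟩ ⟨k + 1, C.pb A B f⟩ :=
  (exists_pbSec g hg).choose

theorem pbSec_q (g : C.Hom ⟨k, B⟩ ⟨m + 1, A⟩) (hg : C.comp g (C.p A) = f) :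
    C.comp (pbSec g hg) (C.q A B f) = g :=
  (exists_pbSec g hg).choose_spec.1

theorem pbSec_pbProj (g : C.Hom ⟨k, B⟩ ⟨m + 1, A⟩) (hg : C.comp g (C.p A) = f) :
    C.comp (pbSec g hg) (pbProj A B f) = C.id ⟨k, B⟩ :=
  (exists_pbSec g hg).choose_spec.2

variable (A B f) in
noncomputable def termOf (g : C.Hom ⟨k, B⟩ ⟨m + 1, A⟩) (hg : C.comp g (C.p A) = f) :
    Tm C k :=
  ⟨C.pb A B f, homCast (obj_congr (C.pb_ft A B f)).symm rfl (pbSec g hg), by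
    apply mor_ext
    calc mor (C.comp (homCast (obj_congr (C.pb_ft A B f)).symm rfl (pbSec g hg))
            (C.p (C.pb A B f)))
        = mor (C.comp (pbSec g hg) (pbProj A B f)) :=
          mor_comp (mor_homCast _ _ _) (mor_homCast _ _ _).symm
      _ = mor (C.id ⟨k, C.ft (C.pb A B f)⟩) := by
          rw [pbSec_pbProj]; exact mor_id (C.pb_ft A B f).symm⟩

theorem mor_termOf_sec (g : C.Hom ⟨k, B⟩ ⟨m + 1, A⟩) (hg : C.comp g (C.p A) = f) :
    mor (termOf A B f g hg).2.1 = mor (pbSec g hg) :=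
  mor_homCast (obj_congr (C.pb_ft A B f)).symm rfl _

theorem termOf_congr {m' : ℕ} {A' : C.Ob (m' + 1)} {f' : C.Hom ⟨k, B⟩ ⟨m', C.ft A'⟩}
    {g : C.Hom ⟨k, B⟩ ⟨m + 1, A⟩} {g' : C.Hom ⟨k, B⟩ ⟨m' + 1, A'⟩}
    {hg : C.comp g (C.p A) = f} {hg' : C.comp g' (C.p A') = f'}
    (em : m = m') (hA : HEq A A') (hgg : mor g = mor g') :
    termOf A B f g hg = termOf A' B f' g' hg' := by
  subst em
  cases eq_of_heq hA
  cases mor_ext hgg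
  subst hg hg'
  rfl

def secOver (t : Tm C k) (h : t.1 = C.pb A B f) : C.Hom ⟨k, B⟩ ⟨k + 1, C.pb A B f⟩ :=
  homCast (obj_congr (ft_eq_of_eq_pb h)) (obj_congr h) t.2.1

def homOf (t : Tm C k) (h : t.1 = C.pb A B f) : C.Hom ⟨k, B⟩ ⟨m + 1, A⟩ :=
  C.comp (secOver t h) (C.q A B f)

@[simp] theorem mor_secOver (t : Tm C k) (h : t.1 = C.pb A B f) :
    mor (secOver t h) = mor t.2.1 :=
  mor_homCast _ _ _

theorem secOver_pbProj (t : Tm C k) (h : t.1 = C.pb A B f) :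
    C.comp (secOver t h) (pbProj A B f) = C.id ⟨k, B⟩ := by
  apply mor_ext
  calc mor (C.comp (secOver t h) (pbProj A B f)) = mor (C.comp t.2.1 (C.p t.1)) :=
        mor_comp (mor_secOver t h) ((mor_homCast _ _ _).trans (mor_p h.symm))
    _ = mor (C.id ⟨k, B⟩) := by rw [t.2.2]; exact mor_id (ft_eq_of_eq_pb h)

theorem homOf_comp_p (t : Tm C k) (h : t.1 = C.pb A B f) : C.comp (homOf t h) (C.p A) = f := by
  rw [homOf, C.assoc, q_comp_p, ← C.assoc, secOver_pbProj, C.id_comp]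

theorem homOf_termOf (g : C.Hom ⟨k, B⟩ ⟨m + 1, A⟩) (hg : C.comp g (C.p A) = f)
    (h : (termOf A B f g hg).1 = C.pb A B f) : homOf (termOf A B f g hg) h = g := by
  have hsec : secOver (termOf A B f g hg) h = pbSec g hg :=
    mor_ext ((mor_secOver _ h).trans (mor_termOf_sec g hg))
  rw [homOf, hsec, pbSec_q]

theorem eq_termOf_iff (t : Tm C k) (g : C.Hom ⟨k, B⟩ ⟨m + 1, A⟩) (hg : C.comp g (C.p A) = f) :
    t = termOf A B f g hg ↔ ∃ h : t.1 = C.pb A B f, homOf t h = g := by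
  constructor
  · rintro rfl
    exact ⟨rfl, homOf_termOf g hg rfl⟩
  · rintro ⟨h, hgt⟩
    have hsec : secOver t h = pbSec g hg :=
      pb_hom_ext A B f (by rw [← homOf, hgt, pbSec_q]) (by rw [secOver_pbProj, pbSec_pbProj])
    refine Tm.ext' h ?_
    rw [← mor_secOver t h, hsec, mor_termOf_sec]

end Induced

theorem comp_pbProj_eq {n m k : ℕ} {A : C.Ob (m + 1)} {B : C.Ob k}
    {f : C.Hom ⟨k, B⟩ ⟨m, C.ft A⟩} {X : C.Ob n} {v : C.Hom ⟨n, X⟩ ⟨k + 1, C.pb A B f⟩}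
    {u : C.Hom ⟨n, X⟩ ⟨k, C.ft (C.pb A B f)⟩} (hv : C.comp v (C.p (C.pb A B f)) = u)
    {u' : C.Hom ⟨n, X⟩ ⟨k, B⟩} (hu : mor u = mor u') : C.comp v (pbProj A B f) = u' :=
  mor_ext ((mor_comp rfl (mor_homCast _ _ _)).trans ((congrArg mor hv).trans hu))

/-- Pasting of pullback squares: a term over `f*A` is a term over `A`. -/
theorem termOf_pb {n m k : ℕ} (A : C.Ob (m + 1)) (B : C.Ob k) (f : C.Hom ⟨k, B⟩ ⟨m, C.ft A⟩)
    {X : C.Ob n} (v : C.Hom ⟨n, X⟩ ⟨k + 1, C.pb A B f⟩)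
    {u : C.Hom ⟨n, X⟩ ⟨k, C.ft (C.pb A B f)⟩} (hv : C.comp v (C.p (C.pb A B f)) = u)
    {u' : C.Hom ⟨n, X⟩ ⟨k, B⟩} (hu : mor u = mor u') :
    termOf (C.pb A B f) X u v hv =
      termOf A X (C.comp u' f) (C.comp v (C.q A B f))
        (by rw [C.assoc, q_comp_p, ← C.assoc, comp_pbProj_eq hv hu]) := by
  have hpb : C.pb (C.pb A B f) X u = C.pb A X (C.comp u' f) := (pb_comp' A B f u' hu).symm
  refine (eq_termOf_iff _ _ _).mpr ⟨hpb, mor_ext ?_⟩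
  calc mor (homOf (termOf (C.pb A B f) X u v hv) hpb)
      = mor (C.comp (secOver (termOf (C.pb A B f) X u v hv) rfl)
          (C.comp (C.q (C.pb A B f) X u) (C.q A B f))) :=
        mor_comp ((mor_secOver _ _).trans (mor_secOver _ _).symm) (mor_q_comp A B f u' hu)
    _ = mor (C.comp v (C.q A B f)) := by
        rw [← C.assoc]
        exact congrArg (fun w => mor (C.comp w (C.q A B f))) (homOf_termOf v hv rfl)

theorem termOf_comp {n m k : ℕ} {A : C.Ob (m + 1)} {B : C.Ob k} {f : C.Hom ⟨k, B⟩ ⟨m, C.ft A⟩}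
    {g : C.Hom ⟨k, B⟩ ⟨m + 1, A⟩} {hg : C.comp g (C.p A) = f} {t : Tm C k}
    (ht : t = termOf A B f g hg) {X : C.Ob n} (u : C.Hom ⟨n, X⟩ ⟨k, C.ft t.1⟩)
    {u' : C.Hom ⟨n, X⟩ ⟨k, B⟩} (hu : mor u = mor u') :
    termOf t.1 X u (C.comp u t.2.1) (by rw [C.assoc, t.2.2, C.comp_id]) =
      termOf A X (C.comp u' f) (C.comp u' g) (by rw [C.assoc, hg]) := by
  subst ht
  refine (termOf_pb A B f (C.comp u _) _ hu).trans (termOf_congr rfl HEq.rfl ?_)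
  calc mor (C.comp (C.comp u (termOf A B f g hg).2.1) (C.q A B f))
      = mor (C.comp (C.comp u' (pbSec g hg)) (C.q A B f)) :=
        mor_comp (mor_comp hu (mor_termOf_sec g hg)) rfl
    _ = mor (C.comp u' g) := by rw [C.assoc, pbSec_q]

theorem termOf_id {n : ℕ} (t : Tm C n) :
    termOf t.1 (C.ft t.1) (C.id _) (C.comp (C.id _) t.2.1) (by rw [C.id_comp, t.2.2]) = t := by
  refine ((eq_termOf_iff t _ _).mpr ⟨(C.pb_id t.1).symm, mor_ext ?_⟩).symm
  calc mor (homOf t (C.pb_id t.1).symm) = mor (C.comp t.2.1 (C.id ⟨n + 1, t.1⟩)) :=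
        mor_comp (mor_secOver _ _) (mor_q_id t.1)
    _ = mor (C.comp (C.id _) t.2.1) := by rw [C.comp_id, C.id_comp]

noncomputable def alpha (n : ℕ) (Γ : C.Ob n) :
    ∀ (k : ℕ) (A : C.Ob k), (Fin k → Tm C n) → Part (C.Hom ⟨n, Γ⟩ ⟨k, A⟩)
  | 0, A, _ => Part.some (homCast rfl (obj_congr (C.pt_unique A).symm) (C.toPt ⟨n, Γ⟩))
  | k + 1, A, a =>
    (alpha n Γ k (C.ft A) (Fin.init a)).bind fun f =>
      Part.assert ((a (Fin.last k)).1 = C.pb A Γ f) fun h => Part.some (homOf (a (Fin.last k)) h)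

noncomputable def substTy (n k : ℕ) (Γ : C.Ob n) (A : C.Ob (k + 1)) (a : Fin k → Tm C n) :
    Part (C.Ob (n + 1)) :=
  (alpha n Γ k (C.ft A) a).map (C.pb A Γ)

noncomputable def substTm (n k : ℕ) (Γ : C.Ob n) (t : Tm C k) (a : Fin k → Tm C n) :
    Part (Tm C n) :=
  (alpha n Γ k (C.ft t.1) a).map fun f =>
    termOf t.1 Γ f (C.comp f t.2.1) (by rw [C.assoc, t.2.2, C.comp_id])

/-- `SubModel.Hom` of the model `toSubModel C` below, with which it agrees definitionally. -/
def IsHom (n k : ℕ) (Γ : C.Ob n) (A : C.Ob k) (a : Fin k → Tm C n) : Prop :=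
  ∀ i : Fin k, (a i).1 ∈ substTy n i Γ (ftLe' (ftF C) (Nat.succ_le_of_lt i.isLt) A)
    fun j => a (Fin.castLE (le_of_lt i.isLt) j)

section Alpha

variable {n : ℕ} {Γ : C.Ob n}

theorem mem_alpha_zero {A : C.Ob 0} (a : Fin 0 → Tm C n) (g : C.Hom ⟨n, Γ⟩ ⟨0, A⟩) :
    g ∈ alpha n Γ 0 A a :=
  Part.mem_some_iff.mpr (hom_ext_zero _ _)

theorem mem_alpha_succ_iff_homOf {k : ℕ} {A : C.Ob (k + 1)} {a : Fin (k + 1) → Tm C n}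
    {g : C.Hom ⟨n, Γ⟩ ⟨k + 1, A⟩} :
    g ∈ alpha n Γ (k + 1) A a ↔ ∃ f ∈ alpha n Γ k (C.ft A) (Fin.init a),
      ∃ h : (a (Fin.last k)).1 = C.pb A Γ f, homOf (a (Fin.last k)) h = g := by
  simp only [alpha, Part.mem_bind_iff, Part.mem_assert_iff, Part.mem_some_iff]
  exact exists_congr fun f => and_congr_right fun _ => exists_congr fun _ => eq_comm

theorem mem_alpha_succ {k : ℕ} {A : C.Ob (k + 1)} {a : Fin (k + 1) → Tm C n}
    {g : C.Hom ⟨n, Γ⟩ ⟨k + 1, A⟩} :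
    g ∈ alpha n Γ (k + 1) A a ↔ C.comp g (C.p A) ∈ alpha n Γ k (C.ft A) (Fin.init a) ∧
      a (Fin.last k) = termOf A Γ _ g rfl := by
  rw [mem_alpha_succ_iff_homOf]
  constructor
  · rintro ⟨f, hf, h, rfl⟩
    have hp := homOf_comp_p (a (Fin.last k)) h
    exact ⟨hp.symm ▸ hf,
      ((eq_termOf_iff _ _ hp).mpr ⟨h, rfl⟩).trans (termOf_congr rfl HEq.rfl rfl)⟩
  · rintro ⟨hf, ht⟩
    obtain ⟨h, hg⟩ := (eq_termOf_iff _ _ _).mp ht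
    exact ⟨_, hf, h, hg⟩

theorem alpha_congr {Γ' : C.Ob n} {k : ℕ} {A A' : C.Ob k} {a : Fin k → Tm C n}
    {g : C.Hom ⟨n, Γ⟩ ⟨k, A⟩} {g' : C.Hom ⟨n, Γ'⟩ ⟨k, A'⟩} (eΓ : Γ = Γ') (eA : A = A')
    (hgg : mor g = mor g') (hg : g ∈ alpha n Γ k A a) : g' ∈ alpha n Γ' k A' a := by
  subst eΓ eA; rwa [← mor_ext hgg]

theorem mor_eq_of_mem_alpha {k : ℕ} {A A' : C.Ob k} {a : Fin k → Tm C n}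
    {g : C.Hom ⟨n, Γ⟩ ⟨k, A⟩} {g' : C.Hom ⟨n, Γ⟩ ⟨k, A'⟩} (e : A = A')
    (hg : g ∈ alpha n Γ k A a) (hg' : g' ∈ alpha n Γ k A' a) : mor g = mor g' := by
  subst e; rw [Part.mem_unique hg hg']

theorem comp_pIter_self_mem_alpha {k : ℕ} {A : C.Ob k} {a : Fin k → Tm C n}
    {g : C.Hom ⟨n, Γ⟩ ⟨k, A⟩} (h : k ≤ k) (hg : g ∈ alpha n Γ k A a) :
    C.comp g (pIter h A) ∈ alpha n Γ k (ftLe' (ftF C) h A) fun j => a (Fin.castLE h j) :=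
  alpha_congr rfl (ftLe'_self h A).symm
    ((mor_comp rfl (mor_pIter_self h A)).trans (congrArg mor (C.comp_id g))).symm hg

theorem comp_pIter_mem_alpha {m : ℕ} : ∀ {k : ℕ} {A : C.Ob k} {a : Fin k → Tm C n}
    {g : C.Hom ⟨n, Γ⟩ ⟨k, A⟩} (h : m ≤ k), g ∈ alpha n Γ k A a →
      C.comp g (pIter h A) ∈ alpha n Γ m (ftLe' (ftF C) h A) fun j => a (Fin.castLE h j)
  | 0, A, a, g, h, hg => by
    obtain rfl : m = 0 := by omega
    exact comp_pIter_self_mem_alpha h hg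
  | k + 1, A, a, g, h, hg => by
    by_cases hm : m = k + 1
    · subst hm
      exact comp_pIter_self_mem_alpha h hg
    · have hmk : m ≤ k := by omega
      refine alpha_congr rfl (ftLe'_succ h hmk A).symm ?_
        (comp_pIter_mem_alpha hmk (mem_alpha_succ.mp hg).1)
      rw [C.assoc]
      exact mor_comp rfl (mor_pIter_succ h hmk A).symm

theorem mem_substTy {k : ℕ} {A : C.Ob (k + 1)} {a : Fin k → Tm C n} {T : C.Ob (n + 1)} :
    T ∈ substTy n k Γ A a ↔ ∃ f ∈ alpha n Γ k (C.ft A) a, C.pb A Γ f = T :=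
  Part.mem_map_iff _

theorem mem_substTm {k : ℕ} {t : Tm C k} {a : Fin k → Tm C n} {s : Tm C n} :
    s ∈ substTm n k Γ t a ↔ ∃ f ∈ alpha n Γ k (C.ft t.1) a,
      termOf t.1 Γ f (C.comp f t.2.1) (by rw [C.assoc, t.2.2, C.comp_id]) = s :=
  Part.mem_map_iff _

theorem substTy_eq_some {k : ℕ} {A : C.Ob (k + 1)} {a : Fin k → Tm C n}
    {f : C.Hom ⟨n, Γ⟩ ⟨k, C.ft A⟩} (hf : f ∈ alpha n Γ k (C.ft A) a) :
    substTy n k Γ A a = Part.some (C.pb A Γ f) :=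
  Part.eq_some_iff.mpr (Part.mem_map _ hf)

theorem substTm_eq_some {k : ℕ} {t : Tm C k} {a : Fin k → Tm C n}
    {f : C.Hom ⟨n, Γ⟩ ⟨k, C.ft t.1⟩} (hf : f ∈ alpha n Γ k (C.ft t.1) a) :
    substTm n k Γ t a =
      Part.some (termOf t.1 Γ f (C.comp f t.2.1) (by rw [C.assoc, t.2.2, C.comp_id])) :=
  Part.eq_some_iff.mpr (Part.mem_map _ hf)

theorem eq_pb_of_mem_substTy {k : ℕ} {A : C.Ob (k + 1)} {a : Fin k → Tm C n}
    {f : C.Hom ⟨n, Γ⟩ ⟨k, C.ft A⟩} (hf : f ∈ alpha n Γ k (C.ft A) a) {T : C.Ob (n + 1)}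
    (hT : T ∈ substTy n k Γ A a) : T = C.pb A Γ f :=
  Part.mem_unique hT (Part.mem_map _ hf)

theorem comp_mem_alpha {k : ℕ} {Δ : C.Ob k} {b : Fin k → Tm C n} {gb : C.Hom ⟨n, Γ⟩ ⟨k, Δ⟩}
    (hb : gb ∈ alpha n Γ k Δ b) :
    ∀ {m : ℕ} {A : C.Ob m} {a : Fin m → Tm C k} {c : Fin m → Tm C n}
      {ga : C.Hom ⟨k, Δ⟩ ⟨m, A⟩}, ga ∈ alpha k Δ m A a →
        (∀ i, c i ∈ substTm n k Γ (a i) b) → C.comp gb ga ∈ alpha n Γ m A c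
  | 0, _, _, _, _, _, _ => mem_alpha_zero _ _
  | m + 1, A, a, c, ga, ha, hc => by
    obtain ⟨hinit, hlast⟩ := mem_alpha_succ.mp ha
    obtain ⟨fb, hfb, hcl⟩ := mem_substTm.mp (hc (Fin.last m))
    have hmor : mor fb = mor gb :=
      mor_eq_of_mem_alpha (ft_eq_of_eq_pb (congrArg Sigma.fst hlast)) hfb hb
    refine mem_alpha_succ.mpr ⟨?_, ?_⟩
    · rw [C.assoc]
      exact comp_mem_alpha hb hinit fun i => hc i.castSucc
    · exact hcl.symm.trans ((termOf_comp hlast fb hmor).trans (termOf_congr rfl HEq.rfl rfl))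

theorem isHom_succ_iff {k : ℕ} {A : C.Ob (k + 1)} {a : Fin (k + 1) → Tm C n} :
    IsHom n (k + 1) Γ A a ↔
      IsHom n k Γ (C.ft A) (Fin.init a) ∧ (a (Fin.last k)).1 ∈ substTy n k Γ A (Fin.init a) := by
  rw [IsHom, Fin.forall_fin_succ']
  refine and_congr (forall_congr' fun i => ?_) ?_
  · rw [ftLe'_succ _ (Nat.succ_le_of_lt i.isLt)]; rfl
  · rw [ftLe'_self]; rfl

theorem dom_alpha_iff : ∀ {k : ℕ} {A : C.Ob k} {a : Fin k → Tm C n},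
    (alpha n Γ k A a).Dom ↔ IsHom n k Γ A a
  | 0, _, _ => iff_of_true trivial fun i => i.elim0
  | k + 1, A, a => by
    rw [isHom_succ_iff, ← dom_alpha_iff, Part.dom_iff_mem, Part.dom_iff_mem]
    simp only [mem_alpha_succ_iff_homOf, mem_substTy]
    constructor
    · rintro ⟨_, f, hf, h, -⟩
      exact ⟨⟨f, hf⟩, f, hf, h.symm⟩
    · rintro ⟨-, f, hf, h⟩
      exact ⟨_, f, hf, h.symm, rfl⟩

noncomputable def toTuple (Γ : C.Ob n) :
    ∀ {k : ℕ} {A : C.Ob k}, C.Hom ⟨n, Γ⟩ ⟨k, A⟩ → Fin k → Tm C n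
  | 0, _, _ => Fin.elim0
  | _ + 1, A, g => Fin.snoc (toTuple Γ (C.comp g (C.p A))) (termOf A Γ _ g rfl)

theorem mem_alpha_toTuple : ∀ {k : ℕ} {A : C.Ob k} (g : C.Hom ⟨n, Γ⟩ ⟨k, A⟩),
    g ∈ alpha n Γ k A (toTuple Γ g)
  | 0, _, g => mem_alpha_zero _ g
  | k + 1, A, g => mem_alpha_succ.mpr
      ⟨by rw [toTuple, Fin.init_snoc]; exact mem_alpha_toTuple _, by rw [toTuple, Fin.snoc_last]⟩

theorem toTuple_eq : ∀ {k : ℕ} {A : C.Ob k} {a : Fin k → Tm C n} {g : C.Hom ⟨n, Γ⟩ ⟨k, A⟩},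
    g ∈ alpha n Γ k A a → toTuple Γ g = a
  | 0, _, _, _, _ => funext fun i => i.elim0
  | k + 1, A, a, g, hg => by
    obtain ⟨hinit, hlast⟩ := mem_alpha_succ.mp hg
    rw [toTuple, toTuple_eq hinit, ← hlast, Fin.snoc_init_self]

noncomputable def tupleEquiv (n k : ℕ) (Γ : C.Ob n) (A : C.Ob k) :
    { a : Fin k → Tm C n // IsHom n k Γ A a } ≃ C.Hom ⟨n, Γ⟩ ⟨k, A⟩ where
  toFun a := (alpha n Γ k A a.1).get (dom_alpha_iff.mpr a.2)
  invFun g := ⟨toTuple Γ g, dom_alpha_iff.mp (Part.dom_iff_mem.mpr ⟨g, mem_alpha_toTuple g⟩)⟩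
  left_inv _ := Subtype.ext (toTuple_eq (Part.get_mem _))
  right_inv g := Part.get_eq_of_mem (mem_alpha_toTuple g) _

theorem tupleEquiv_mem {k : ℕ} {A : C.Ob k} {a : Fin k → Tm C n} (h : IsHom n k Γ A a) :
    tupleEquiv n k Γ A ⟨a, h⟩ ∈ alpha n Γ k A a :=
  Part.get_mem _

theorem tupleEquiv_eq {k : ℕ} {A : C.Ob k} {a : Fin k → Tm C n} (h : IsHom n k Γ A a)
    {g : C.Hom ⟨n, Γ⟩ ⟨k, A⟩} (hg : g ∈ alpha n Γ k A a) : tupleEquiv n k Γ A ⟨a, h⟩ = g :=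
  Part.get_eq_of_mem hg _

/-- Variables are indexed by level: `var (m := m) h Γ` is the paper's `v_{n, n-1-m}(Γ)`. -/
noncomputable def var {m : ℕ} (h : m + 1 ≤ n) (Γ : C.Ob n) : Tm C n :=
  termOf (ftLe' (ftF C) h Γ) Γ
    (homCast rfl (obj_congr (ft_ftLe' h Γ)).symm (pIter (by omega : m ≤ n) Γ)) (pIter h Γ)
    (mor_ext ((mor_pIter_comp_p h Γ).trans (mor_homCast _ _ _).symm))

theorem var_congr {m m' : ℕ} (e : m = m') (h : m + 1 ≤ n) (h' : m' + 1 ≤ n) (Γ : C.Ob n) :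
    var h Γ = var h' Γ := by
  subst e; rfl

theorem var_last (Γ : C.Ob (n + 1)) :
    var (m := n) le_rfl Γ = termOf Γ Γ (C.p Γ) (C.id _) (C.id_comp _) :=
  termOf_congr rfl (heq_of_eq (ftLe'_self _ Γ)) (mor_pIter_self _ Γ)

theorem pIter_mem_alpha (Γ : C.Ob n) : ∀ {m : ℕ} (h : m ≤ n) {a : Fin m → Tm C n},
    (∀ j, a j = var (j.isLt.trans_le h) Γ) → pIter h Γ ∈ alpha n Γ m (ftLe' (ftF C) h Γ) a
  | 0, _, _, _ => mem_alpha_zero _ _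
  | m + 1, h, a, ha => mem_alpha_succ.mpr
      ⟨alpha_congr rfl (ft_ftLe' h Γ).symm (mor_pIter_comp_p h Γ).symm
        (pIter_mem_alpha Γ (by omega) fun j => ha j.castSucc),
      (ha (Fin.last m)).trans (termOf_congr rfl HEq.rfl rfl)⟩

theorem id_mem_alpha (Γ : C.Ob n) {a : Fin n → Tm C n} (ha : ∀ j, a j = var j.isLt Γ) :
    C.id ⟨n, Γ⟩ ∈ alpha n Γ n Γ a :=
  alpha_congr rfl (ftLe'_self le_rfl Γ) (mor_pIter_self le_rfl Γ) (pIter_mem_alpha Γ le_rfl ha)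

theorem p_mem_alpha (A : C.Ob (n + 1)) {a : Fin n → Tm C (n + 1)}
    (ha : ∀ j, a j = var (Nat.lt_succ_of_lt j.isLt) A) : C.p A ∈ alpha (n + 1) A n (C.ft A) a := by
  refine alpha_congr rfl ((ftLe'_succ _ le_rfl A).trans (ftLe'_self _ _)) ?_
    (pIter_mem_alpha A (Nat.le_succ n) ha)
  exact (mor_pIter_succ _ le_rfl A).trans
    ((mor_comp rfl (mor_pIter_self _ _)).trans (by rw [C.comp_id]))

theorem substTm_var {k m : ℕ} {A : C.Ob k} {a : Fin k → Tm C n} (ha : IsHom n k Γ A a)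
    (h : m + 1 ≤ k) : substTm n k Γ (var h A) a = Part.some (a ⟨m, h⟩) := by
  obtain ⟨g, hg⟩ := Part.dom_iff_mem.mp (dom_alpha_iff.mpr ha)
  have hft : A = C.ft (var h A).1 := (C.pb_ft _ _ _).symm
  rw [substTm_eq_some (alpha_congr rfl hft (mor_homCast rfl (obj_congr hft) g).symm hg),
    termOf_comp (t := var h A) rfl _ (mor_homCast _ _ _)]
  exact congrArg Part.some ((termOf_congr rfl HEq.rfl rfl).trans
    (mem_alpha_succ.mp (comp_pIter_mem_alpha h hg)).2.symm)

theorem substTm_substTm {k m : ℕ} {Δ : C.Ob k} {b : Fin k → Tm C n} {a : Fin m → Tm C k}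
    {t : Tm C m} {s : Tm C k} {c : Fin m → Tm C n} (hb : IsHom n k Γ Δ b)
    (hs : s ∈ substTm k m Δ t a)
    (hc : ∀ i, c i ∈ substTm n k Γ (a i) b) : substTm n k Γ s b = substTm n m Γ t c := by
  obtain ⟨gb, hgb⟩ := Part.dom_iff_mem.mp (dom_alpha_iff.mpr hb)
  obtain ⟨fa, hfa, rfl⟩ := mem_substTm.mp hs
  have hft : Δ = C.ft (C.pb t.1 Δ fa) := (C.pb_ft _ _ _).symm
  rw [substTm_eq_some (alpha_congr rfl hft (mor_homCast rfl (obj_congr hft) gb).symm hgb),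
    substTm_eq_some (comp_mem_alpha hgb hfa hc)]
  exact congrArg Part.some ((termOf_comp rfl _ (mor_homCast _ _ _)).trans
    (termOf_congr rfl HEq.rfl (by rw [C.assoc])))

theorem substTy_substTy {k m : ℕ} {Δ : C.Ob k} {b : Fin k → Tm C n} {a : Fin m → Tm C k}
    {A : C.Ob (m + 1)} {A' : C.Ob (k + 1)} {c : Fin m → Tm C n} (hb : IsHom n k Γ Δ b)
    (hA' : A' ∈ substTy k m Δ A a) (hc : ∀ i, c i ∈ substTm n k Γ (a i) b) :
    substTy n k Γ A' b = substTy n m Γ A c := by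
  obtain ⟨gb, hgb⟩ := Part.dom_iff_mem.mp (dom_alpha_iff.mpr hb)
  obtain ⟨fa, hfa, rfl⟩ := mem_substTy.mp hA'
  have hft : Δ = C.ft (C.pb A Δ fa) := (C.pb_ft _ _ _).symm
  rw [substTy_eq_some (alpha_congr rfl hft (mor_homCast rfl (obj_congr hft) gb).symm hgb),
    substTy_eq_some (comp_mem_alpha hgb hfa hc), pb_comp' A Δ fa gb (mor_homCast _ _ _)]

theorem q_mem_alpha {k : ℕ} {A : C.Ob (k + 1)} {a : Fin k → Tm C n}
    {f : C.Hom ⟨n, Γ⟩ ⟨k, C.ft A⟩} (hf : f ∈ alpha n Γ k (C.ft A) a)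
    {p : Fin n → Tm C (n + 1)} (hp : ∀ j, p j = var (Nat.lt_succ_of_lt j.isLt) (C.pb A Γ f))
    {qa : Fin (k + 1) → Tm C (n + 1)}
    (hinit : ∀ i : Fin k, qa i.castSucc ∈ substTm (n + 1) n (C.pb A Γ f) (a i) p)
    (hlast : qa (Fin.last k) = var (m := n) le_rfl (C.pb A Γ f)) :
    C.q A Γ f ∈ alpha (n + 1) (C.pb A Γ f) (k + 1) A qa := by
  refine mem_alpha_succ.mpr ⟨?_, ?_⟩
  · rw [q_comp_p]
    have hproj : mor (C.p (C.pb A Γ f)) = mor (pbProj A Γ f) :=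
      (mor_homCast rfl (obj_congr (C.pb_ft A Γ f)) _).symm
    exact comp_mem_alpha (alpha_congr rfl (C.pb_ft A Γ f) hproj (p_mem_alpha _ hp)) hf hinit
  · rw [hlast, var_last, termOf_pb A Γ f (C.id _) (C.id_comp _)
      (mor_homCast rfl (obj_congr (C.pb_ft A Γ f)) _).symm]
    exact termOf_congr rfl HEq.rfl (by rw [C.id_comp])

end Alpha

noncomputable def toSubModel (C : CtxCat.{u}) : SubModel.{u} where
  Ctx := C.Ob
  Tm := Tm C
  star := C.pt
  ctx_zero_unique := C.pt_unique
  ft _ A := C.ft A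
  ty _ t := t.1
  v _ i _ Γ := var (m := _ - i - 1) (by omega) Γ
  substTy := substTy
  substTm := substTm
  ax_def_substTy _ _ _ _ _ := dom_alpha_iff
  ax_def_substTm _ _ _ _ _ := dom_alpha_iff
  ax_type_var _ _ _ Γ := mem_substTy.mpr ⟨_, alpha_congr rfl (ft_ftLe' _ Γ).symm
    (mor_homCast _ _ _).symm (pIter_mem_alpha Γ _ fun _ => var_congr (by omega) _ _ _), rfl⟩
  ax_type_substTy _ _ Γ A _ _ hT := by
    obtain ⟨f, -, rfl⟩ := mem_substTy.mp hT
    exact C.pb_ft A Γ f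
  ax_type_substTm _ _ _ _ _ := Part.map_map _ _ _
  ax_subst_var_ty _ A := by
    rw [substTy_eq_some (id_mem_alpha _ fun _ => var_congr (by omega) _ _ _), C.pb_id]
  ax_subst_var_tm _ t := by
    rw [substTm_eq_some (id_mem_alpha _ fun _ => var_congr (by omega) _ _ _), termOf_id]
  ax_var_subst _ _ _ _ _ ha _ _ := substTm_var ha _
  ax_subst_subst_tm _ _ _ _ _ _ _ _ hb _ _ hs _ hc := substTm_substTm hb hs hc
  ax_subst_subst_ty _ _ _ _ _ _ _ _ hb _ _ hA' _ hc := substTy_substTy hb hA' hc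

end CtxCat

open CtxCat in
/-- Every contextual category `C` arises, up to isomorphism, from a model
of the theory of substitutions `𝕊`: there is a model `M` whose contexts of length `n` are
the objects of level `n` of `C` and whose terms of length `n` are the pairs of an object
`A` of level `n+1` together with a section of `p_A`, such that the contextual category
`F(M)` associated to `M` is isomorphic to `C` (via the correspondence of objects and of
compatible tuples with morphisms of `C`). -/
theorem contextual_category_from_submodel (C : CtxCat.{u}) :
    ∃ (M : SubModel.{u}) (corr : SubCtxCorrespondence M C)
      (tmEquiv : ∀ n, M.Tm n ≃
        (Σ A : C.Ob (n + 1), { s : C.Hom ⟨n, C.ft A⟩ ⟨n + 1, A⟩ //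
          C.comp s (C.p A) = C.id ⟨n, C.ft A⟩ })),
      ∀ n (t : M.Tm n), ((tmEquiv n) t).1 = corr.obEquiv (n + 1) (M.ty n t) := by
  refine ⟨toSubModel C, ?_, fun _ => Equiv.refl _, ?_⟩
  refine
    { obEquiv := fun _ => Equiv.refl _
      ft_compat := fun _ _ => rfl
      homEquiv := tupleEquiv
      id_compat := fun _ A h => tupleEquiv_eq h (id_mem_alpha A fun _ => var_congr (by omega) _ _ _)
      comp_compat := fun _ _ _ f g h hsub =>
        (tupleEquiv_eq h.2 (comp_mem_alpha (tupleEquiv_mem f.2) (tupleEquiv_mem g.2) hsub)).symm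
      p_compat := fun _ A h => tupleEquiv_eq h (p_mem_alpha A fun _ => var_congr (by omega) _ _ _)
      pb_compat := fun _ _ _ _ _ h _ hT => eq_pb_of_mem_substTy (tupleEquiv_mem h) hT
      q_compat := fun _ _ _ _ _ h _ hT _ hq hinit hlast => ?_ }
  · obtain rfl := eq_pb_of_mem_substTy (tupleEquiv_mem h) hT
    have hq_mem := q_mem_alpha (tupleEquiv_mem h) (fun _ => var_congr (by omega) _ _ _) hinit
      (hlast.trans (var_congr (by omega) _ _ _))
    exact eq_cast_of_mor rfl rfl _ ((congrArg mor (tupleEquiv_eq hq hq_mem)).trans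
      (mor_q rfl HEq.rfl (mor_cast rfl rfl _ _).symm))
  · exact fun _ _ => rfl
end

section
/- In the contextual category built from a contextual category C via the model construction, the comparison bijection α preserves composition: for a morphism f and a compatible tuple (a_1,...,a_k), α(a_1,...,a_k) ∘ f = α(a_1[f],...,a_k[f]), where a[f] denotes the section s_{a∘f}. -/
universe u

/-- The model of the theory of substitutions built from a contextual category `C`:
contexts are objects, terms are sections of the projections (here recorded via the family
`sec`), substitution of a section `a` along `f` is `s_{a∘f}`, and the comparison `α`
(here `homEquiv`) between compatible tuples of sections and morphisms of `C` is defined by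
induction: `α()` is the unique map to the terminal object and
`α(a₁, …, a_{k+1}) = q(α(a₁, …, a_k), A) ∘ a_{k+1}`. -/
structure ModelFromCtx (C : CtxCat.{u}) (M : SubModel.{u}) where
  obEquiv : ∀ n, M.Ctx n ≃ C.Ob n
  ft_compat : ∀ n (A : M.Ctx (n + 1)),
    C.ft (obEquiv (n + 1) A) = obEquiv n (M.ft n A)
  /-- the section of `p_{ty(t)}` corresponding to a term `t` -/
  sec : ∀ n (t : M.Tm n),
    C.Hom ⟨n, obEquiv n (M.ft n (M.ty n t))⟩ ⟨n + 1, obEquiv (n + 1) (M.ty n t)⟩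
  sec_is_section : ∀ n (t : M.Tm n),
    C.comp (sec n t) (C.p (obEquiv (n + 1) (M.ty n t))) =
      cast (by rw [ft_compat n (M.ty n t)])
        (C.id ⟨n, obEquiv n (M.ft n (M.ty n t))⟩)
  homEquiv : ∀ n k (B : M.Ctx n) (A : M.Ctx k),
    { a : Fin k → M.Tm n // M.Hom n k B A a } ≃
      C.Hom ⟨n, obEquiv n B⟩ ⟨k, obEquiv k A⟩
  hom_zero : ∀ n (B : M.Ctx n) (A : M.Ctx 0) (a : Fin 0 → M.Tm n)
    (h : M.Hom n 0 B A a),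
    homEquiv n 0 B A ⟨a, h⟩ =
      cast (by rw [C.pt_unique (obEquiv 0 A)]) (C.toPt ⟨n, obEquiv n B⟩)
  pb_compat : ∀ n k (B : M.Ctx n) (A : M.Ctx (k + 1)) (a : Fin k → M.Tm n)
    (h : M.Hom n k B (M.ft k A) a) (T : M.Ctx (n + 1)) (_ : T ∈ M.substTy n k B A a),
    obEquiv (n + 1) T =
      C.pb (obEquiv (k + 1) A) (obEquiv n B)
        (cast (by rw [ft_compat k A]) (homEquiv n k B (M.ft k A) ⟨a, h⟩))
  hom_succ : ∀ n k (B : M.Ctx n) (A : M.Ctx (k + 1)) (a : Fin (k + 1) → M.Tm n)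
    (h : M.Hom n (k + 1) B A a)
    (h' : M.Hom n k B (M.ft k A) (fun i => a i.castSucc))
    (T : M.Ctx (n + 1)) (hT : T ∈ M.substTy n k B A (fun i => a i.castSucc))
    (hty : M.ty n (a (Fin.last k)) = T) (hftT : M.ft n T = B),
    homEquiv n (k + 1) B A ⟨a, h⟩ =
      C.comp (cast (by rw [hty, hftT]) (sec n (a (Fin.last k))))
        (cast (by rw [pb_compat n k B A (fun i => a i.castSucc) h' T hT])
          (C.q (obEquiv (k + 1) A) (obEquiv n B)
            (cast (by all_goals rw [ft_compat k A])
              (homEquiv n k B (M.ft k A) ⟨fun i => a i.castSucc, h'⟩))))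
  subst_sec : ∀ m n (t : M.Tm n) (b : Fin n → M.Tm m) (B' : M.Ctx m)
    (hb : M.Hom m n B' (M.ft n (M.ty n t)) b) (r : M.Tm m)
    (_ : r ∈ M.substTm m n B' t b)
    (hTy : M.ty m r ∈ M.substTy m n B' (M.ty n t) b) (hft : M.ft m (M.ty m r) = B'),
    C.comp (cast (by rw [hft]) (sec m r))
        (cast (by rw [pb_compat m n B' (M.ty n t) b hb (M.ty m r) hTy])
          (C.q (obEquiv (n + 1) (M.ty n t)) (obEquiv m B')
            (cast (by all_goals rw [ft_compat n (M.ty n t)])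
              (homEquiv m n B' (M.ft n (M.ty n t)) ⟨b, hb⟩)))) =
      C.comp (homEquiv m n B' (M.ft n (M.ty n t)) ⟨b, hb⟩) (sec n t)

/-! Induction on the length of the tuple `a = (a', a_{k+1})`. Unfolding
`α(a) = q(α(a'), A) ∘ s_{a_{k+1}}`, the defining property of substitution of sections,
`s_t ∘ α(b) = q(α(b), ty t) ∘ s_{t[b]}`, moves the section past `α(b)`; functoriality of `q`
then merges `q(α(a'), A) ∘ q(α(b), ty a_{k+1})` into `q(α(a') ∘ α(b), A)`, which is
`q(α(a'[b]), A)` by the induction hypothesis, and what remains is `α(a[b])`. -/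

theorem ftLe'_self {Ctx : ℕ → Type u} (ft : ∀ n, Ctx (n + 1) → Ctx n) :
    ∀ {k : ℕ} (h : k ≤ k) (A : Ctx k), ftLe' ft h A = A
  | 0, _, _ => rfl
  | _ + 1, _, _ => by rw [ftLe', dif_pos rfl, cast_eq]

theorem ftLe'_succ {Ctx : ℕ → Type u} (ft : ∀ n, Ctx (n + 1) → Ctx n) {k m : ℕ}
    (h : m ≤ k) (h' : m ≤ k + 1) (A : Ctx (k + 1)) :
    ftLe' ft h' A = ftLe' ft h (ft k A) := by
  rw [ftLe', dif_neg (by omega)]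

namespace SubModel

variable {M : SubModel.{u}} {n k : ℕ} {B : M.Ctx n} {A : M.Ctx (k + 1)}
  {a : Fin (k + 1) → M.Tm n}

theorem Hom.ty_last_mem (h : M.Hom n (k + 1) B A a) :
    M.ty n (a (Fin.last k)) ∈ M.substTy n k B A (fun i => a i.castSucc) := by
  have h_last := h (Fin.last k)
  rwa [ftLe'_self] at h_last

theorem Hom.init (h : M.Hom n (k + 1) B A a) :
    M.Hom n k B (M.ft k A) (fun i => a i.castSucc) := fun i => by
  have h_i := h i.castSucc
  rwa [ftLe'_succ M.ft (Nat.succ_le_of_lt i.isLt)] at h_i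

theorem ty_mem_substTy_of_mem_substTm {B : M.Ctx n} {t : M.Tm k} {b : Fin k → M.Tm n}
    {r : M.Tm n} (hr : r ∈ M.substTm n k B t b) :
    M.ty n r ∈ M.substTy n k B (M.ty k t) b := by
  rw [← M.ax_type_substTm]
  exact Part.mem_map _ hr

end SubModel

namespace CtxCat

variable (C : CtxCat.{u})

theorem subsingleton_hom_level_zero (X : Σ n, C.Ob n) (A : C.Ob 0) :
    Subsingleton (C.Hom X ⟨0, A⟩) := by
  obtain rfl := C.pt_unique A
  exact ⟨fun f g => (C.toPt_unique X f).trans (C.toPt_unique X g).symm⟩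

variable {C}

theorem comp_heq_comp {X X' Y Y' Z Z' : Σ n, C.Ob n} (hX : X = X') (hY : Y = Y') (hZ : Z = Z')
    {f : C.Hom X Y} {f' : C.Hom X' Y'} {g : C.Hom Y Z} {g' : C.Hom Y' Z'}
    (hf : f ≍ f') (hg : g ≍ g') : C.comp f g ≍ C.comp f' g' := by
  subst hX hY hZ hf hg
  rfl

theorem pb_eq_pb {n k : ℕ} {A A' : C.Ob (n + 1)} {B : C.Ob k} (hA : A = A')
    {f : C.Hom ⟨k, B⟩ ⟨n, C.ft A⟩} {f' : C.Hom ⟨k, B⟩ ⟨n, C.ft A'⟩} (hf : f ≍ f') :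
    C.pb A B f = C.pb A' B f' := by
  subst hA hf
  rfl

theorem q_heq_q {n k : ℕ} {A A' : C.Ob (n + 1)} {B : C.Ob k} (hA : A = A')
    {f : C.Hom ⟨k, B⟩ ⟨n, C.ft A⟩} {f' : C.Hom ⟨k, B⟩ ⟨n, C.ft A'⟩} (hf : f ≍ f') :
    C.q A B f ≍ C.q A' B f' := by
  subst hA hf
  rfl

end CtxCat

namespace ModelFromCtx

variable {C : CtxCat.{u}} {M : SubModel.{u}} (mf : ModelFromCtx C M)

/-- `q(α(a), A) : A[a] → A`, retyped along `pb_compat` so that its source is the context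
`T = A[a]` of the model. -/
def qHom {n k : ℕ} {B : M.Ctx n} {A : M.Ctx (k + 1)} {a : Fin k → M.Tm n}
    (h : M.Hom n k B (M.ft k A) a) {T : M.Ctx (n + 1)} (hT : T ∈ M.substTy n k B A a) :
    C.Hom ⟨n + 1, mf.obEquiv (n + 1) T⟩ ⟨k + 1, mf.obEquiv (k + 1) A⟩ :=
  cast (congrArg (fun X => C.Hom ⟨n + 1, X⟩ _) (mf.pb_compat n k B A a h T hT).symm)
    (C.q (mf.obEquiv (k + 1) A) (mf.obEquiv n B)
      (cast (by rw [mf.ft_compat k A]) (mf.homEquiv n k B (M.ft k A) ⟨a, h⟩)))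

theorem homEquiv_succ {n k : ℕ} {A : M.Ctx (k + 1)} {a : Fin (k + 1) → M.Tm n}
    (h : M.Hom n (k + 1) (M.ft n (M.ty n (a (Fin.last k)))) A a) :
    mf.homEquiv n (k + 1) _ A ⟨a, h⟩ =
      C.comp (mf.sec n (a (Fin.last k))) (mf.qHom h.init h.ty_last_mem) :=
  mf.hom_succ n k _ A a h h.init _ h.ty_last_mem rfl rfl

theorem sec_comp_qHom {m n : ℕ} {t : M.Tm n} {b : Fin n → M.Tm m} {r : M.Tm m}
    (hb : M.Hom m n (M.ft m (M.ty m r)) (M.ft n (M.ty n t)) b)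
    (hr : r ∈ M.substTm m n _ t b) :
    C.comp (mf.sec m r) (mf.qHom hb (M.ty_mem_substTy_of_mem_substTm hr)) =
      C.comp (mf.homEquiv m n _ _ ⟨b, hb⟩) (mf.sec n t) :=
  mf.subst_sec m n t b _ hb r hr (M.ty_mem_substTy_of_mem_substTm hr) rfl

/-- Functoriality of `q`, `q(f ∘ g, A) = q(f, A) ∘ q(g, f*A)`, read in the model. -/
theorem qHom_comp_qHom {m n k : ℕ} {B' : M.Ctx m} {T : M.Ctx (n + 1)} {A : M.Ctx (k + 1)}
    {b : Fin n → M.Tm m} {a : Fin k → M.Tm n} {c : Fin k → M.Tm m} {T' : M.Ctx (m + 1)}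
    (hb : M.Hom m n B' (M.ft n T) b) (ha : M.Hom n k (M.ft n T) (M.ft k A) a)
    (hc : M.Hom m k B' (M.ft k A) c) (hT : T ∈ M.substTy n k _ A a)
    (hT'b : T' ∈ M.substTy m n B' T b) (hT'c : T' ∈ M.substTy m k B' A c)
    (hcomp : C.comp (mf.homEquiv m n B' _ ⟨b, hb⟩) (mf.homEquiv n k _ _ ⟨a, ha⟩) =
      mf.homEquiv m k B' _ ⟨c, hc⟩) :
    C.comp (mf.qHom hb hT'b) (mf.qHom ha hT) = mf.qHom hc hT'c := by
  set f : C.Hom ⟨n, mf.obEquiv n (M.ft n T)⟩ ⟨k, C.ft (mf.obEquiv (k + 1) A)⟩ :=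
    cast (by rw [mf.ft_compat k A]) (mf.homEquiv n k _ _ ⟨a, ha⟩)
  have hpbT := mf.pb_compat n k _ A a ha T hT
  have hcomp' : C.comp (mf.homEquiv m n B' _ ⟨b, hb⟩) f =
      cast (by rw [mf.ft_compat k A]) (mf.homEquiv m k B' _ ⟨c, hc⟩) :=
    eq_of_heq <| (C.comp_heq_comp rfl rfl (by rw [mf.ft_compat k A]) HEq.rfl (cast_heq _ _)).trans
      ((heq_of_eq hcomp).trans (cast_heq _ _).symm)
  have hq := C.q_comp _ _ f (mf.obEquiv m B') (mf.homEquiv m n B' _ ⟨b, hb⟩)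
  rw [hcomp'] at hq
  refine eq_of_heq <| HEq.trans ?_ (hq.symm.trans ?_)
  · refine C.comp_heq_comp ?_ (by rw [hpbT]) rfl ?_ (cast_heq _ _)
    · exact congrArg (Sigma.mk (m + 1)) ((mf.pb_compat m n B' T b hb T' hT'b).trans
        (C.pb_eq_pb hpbT ((cast_heq _ _).trans (cast_heq _ _).symm)))
    · exact (cast_heq _ _).trans (C.q_heq_q hpbT ((cast_heq _ _).trans (cast_heq _ _).symm))
  · exact (cast_heq _ _).symm

end ModelFromCtx

/-- In the model of `𝕊` built from a contextual category `C`, the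
comparison bijection `α` preserves composition: `α(a₁, …, a_k) ∘ f = α(a₁[f], …, a_k[f])`,
where `a[f] = s_{a∘f}` is implemented by the substitution operation of the model. -/
theorem modelFromCtx_alpha_preserves_comp (C : CtxCat.{u}) (M : SubModel.{u})
    (mf : ModelFromCtx C M) (m n k : ℕ)
    (B' : M.Ctx m) (B : M.Ctx n) (A : M.Ctx k)
    (bs : Fin n → M.Tm m) (hb : M.Hom m n B' B bs)
    (as : Fin k → M.Tm n) (ha : M.Hom n k B A as)
    (cs : Fin k → M.Tm m) (hc : M.Hom m k B' A cs)
    (hsubst : ∀ i, cs i ∈ M.substTm m n B' (as i) bs) :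
    C.comp (mf.homEquiv m n B' B ⟨bs, hb⟩) (mf.homEquiv n k B A ⟨as, ha⟩) =
      mf.homEquiv m k B' A ⟨cs, hc⟩ := by
  induction k with
  | zero => exact (C.subsingleton_hom_level_zero _ _).elim _ _
  | succ k ih =>
    -- replacing `B`, `B'` by the bases of the last types makes the casts in `hom_succ` trivial
    obtain rfl := M.ax_type_substTy _ _ _ _ _ _ ha.ty_last_mem
    obtain rfl := M.ax_type_substTy _ _ _ _ _ _ hc.ty_last_mem
    have hsubst_last := hsubst (Fin.last k)
    have hcomp_init := ih (M.ft k A) _ ha.init _ hc.init (fun i => hsubst i.castSucc)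
    rw [mf.homEquiv_succ ha, mf.homEquiv_succ hc, ← C.assoc, ← mf.sec_comp_qHom hb hsubst_last,
      C.assoc, mf.qHom_comp_qHom hb ha.init hc.init ha.ty_last_mem _ hc.ty_last_mem hcomp_init]
end
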